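/- Let H be the group of order 243 presented by generators η₁, η₂, η₃, z₁₂, z₂₃ with relations η₁³ = η₂³ = η₃³ = z₁₂³ = z₂₃³ = 1, z₁₂ and z₂₃ central, η₂η₁ = z₁₂⁻¹η₁η₂, η₃η₁η₃⁻¹ = z₁₂η₁η₂², η₃η₂η₃⁻¹ = z₂₃²η₂. Let A = ⟨z₁₂, z₂₃⟩ ≅ C₃ × C₃. Then A ⊆ Z(H) ∩ [H,H] and H/A is isomorphic to the Heisenberg group over ℤ/3ℤ (i.e., H is an efficient central extension of the nonabelian group of order 27 and exponent 3 by C₃ × C₃). -/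

import Mathlib

/-- The Heisenberg group over a commutative ring `R`: triples `(x, y, z)`
corresponding to the upper unitriangular matrices `![![1, x, z], ![0, 1, y], ![0, 0, 1]]`,
with multiplication given by matrix multiplication. -/
@[ext]
structure Heisenberg (R : Type*) [CommRing R] where
  x : R
  y : R
  z : R

namespace Heisenberg

variable {R : Type*} [CommRing R]

instance : Mul (Heisenberg R) :=
  ⟨fun a b => ⟨a.x + b.x, a.y + b.y, a.z + b.z + a.x * b.y⟩⟩

instance : One (Heisenberg R) := ⟨⟨0, 0, 0⟩⟩

instance : Inv (Heisenberg R) := ⟨fun a => ⟨-a.x, -a.y, a.x * a.y - a.z⟩⟩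

@[simp] theorem mul_x (a b : Heisenberg R) : (a * b).x = a.x + b.x := rfl
@[simp] theorem mul_y (a b : Heisenberg R) : (a * b).y = a.y + b.y := rfl
@[simp] theorem mul_z (a b : Heisenberg R) : (a * b).z = a.z + b.z + a.x * b.y := rfl
@[simp] theorem one_x : (1 : Heisenberg R).x = 0 := rfl
@[simp] theorem one_y : (1 : Heisenberg R).y = 0 := rfl
@[simp] theorem one_z : (1 : Heisenberg R).z = 0 := rfl
@[simp] theorem inv_x (a : Heisenberg R) : a⁻¹.x = -a.x := rfl
@[simp] theorem inv_y (a : Heisenberg R) : a⁻¹.y = -a.y := rfl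
@[simp] theorem inv_z (a : Heisenberg R) : a⁻¹.z = a.x * a.y - a.z := rfl

instance instGroup : Group (Heisenberg R) where
  mul_assoc a b c := by ext <;> simp <;> ring
  one_mul a := by ext <;> simp
  mul_one a := by ext <;> simp
  inv_mul_cancel a := by ext <;> simp

/-- The triple `(x,y,z)` corresponds to the matrix `![![1,x,z],![0,1,y],![0,0,1]]`,
and multiplication is matrix multiplication (in the `(x, y, z)` coordinates). -/
theorem mul_def (a b : Heisenberg R) :
    a * b = ⟨a.x + b.x, a.y + b.y, a.z + b.z + a.x * b.y⟩ := rfl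

end Heisenberg

namespace Stmt18

private def rη₁ : FreeGroup (Fin 5) := FreeGroup.of 0
private def rη₂ : FreeGroup (Fin 5) := FreeGroup.of 1
private def rη₃ : FreeGroup (Fin 5) := FreeGroup.of 2
private def rz₁₂ : FreeGroup (Fin 5) := FreeGroup.of 3
private def rz₂₃ : FreeGroup (Fin 5) := FreeGroup.of 4

/-- Relators: `η₁³ = η₂³ = η₃³ = z₁₂³ = z₂₃³ = 1`, `z₁₂, z₂₃` central,
`η₂η₁ = z₁₂⁻¹η₁η₂`, `η₃η₁η₃⁻¹ = z₁₂η₁η₂²`, `η₃η₂η₃⁻¹ = z₂₃²η₂`. -/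
def rels : Set (FreeGroup (Fin 5)) :=
  {rη₁ ^ 3, rη₂ ^ 3, rη₃ ^ 3, rz₁₂ ^ 3, rz₂₃ ^ 3,
   rz₁₂ * rη₁ * rz₁₂⁻¹ * rη₁⁻¹, rz₁₂ * rη₂ * rz₁₂⁻¹ * rη₂⁻¹,
   rz₁₂ * rη₃ * rz₁₂⁻¹ * rη₃⁻¹, rz₁₂ * rz₂₃ * rz₁₂⁻¹ * rz₂₃⁻¹,
   rz₂₃ * rη₁ * rz₂₃⁻¹ * rη₁⁻¹, rz₂₃ * rη₂ * rz₂₃⁻¹ * rη₂⁻¹,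
   rz₂₃ * rη₃ * rz₂₃⁻¹ * rη₃⁻¹,
   rη₂ * rη₁ * (rz₁₂⁻¹ * rη₁ * rη₂)⁻¹,
   rη₃ * rη₁ * rη₃⁻¹ * (rz₁₂ * rη₁ * rη₂ ^ 2)⁻¹,
   rη₃ * rη₂ * rη₃⁻¹ * (rz₂₃ ^ 2 * rη₂)⁻¹}

/-- The presented group `H` of order 243. -/
abbrev H := PresentedGroup rels

def η₂ : H := PresentedGroup.of 1
def z₁₂ : H := PresentedGroup.of 3
def z₂₃ : H := PresentedGroup.of 4

abbrev C3 := Multiplicative (ZMod 3)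

/-- The central subgroup `A = ⟨z₁₂, z₂₃⟩`. -/
def A : Subgroup H := Subgroup.closure {z₁₂, z₂₃}

end Stmt18

/-!
The relators make `z₁₂` and `z₂₃` central, and `z₁₂ = ⁅η₁, η₂⁆`, `z₂₃ = ⁅η₃, η₂⁆ ^ 2`; so `A` lies in
`Z(H) ∩ [H, H]` and is normal. Whenever `X`, `Y`, `Z` have order dividing `n`, `Z` commutes with `X`
and `Y`, and `X * Y = Y * X * Z`, the map `(a, b, c) ↦ Y ^ b * X ^ a * Z ^ c` is a homomorphism
`Heisenberg (ZMod n) →* G`. Modulo `A` this applies to `X = η₃`, `Y = η₁`, `Z = η₂ ^ 2`, and the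
homomorphism inverts the map `H ⧸ A → Heisenberg (ZMod 3)` read off the presentation. That `z₁₂` and
`z₂₃` generate a group of order `9` is checked in an explicit model of `H` on `(ZMod 3)⁵`.
-/

theorem pow_zmod_val_natCast {M : Type*} [Monoid M] {n : ℕ} {g : M} (hg : g ^ n = 1) (k : ℕ) :
    g ^ (k : ZMod n).val = g ^ k := by
  rw [ZMod.val_natCast, ← pow_eq_pow_mod k hg]

def zmodPowHom {M : Type*} [Monoid M] {n : ℕ} [NeZero n] {g : M} (hg : g ^ n = 1) :
    Multiplicative (ZMod n) →* M where
  toFun a := g ^ a.toAdd.val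
  map_one' := by simp
  map_mul' a b := by rw [toAdd_mul, ZMod.val_add, ← pow_eq_pow_mod _ hg, pow_add]

section Commutator

open scoped commutatorElement

variable {G : Type*} [Group G] {X Y Z : G}

theorem mul_pow_eq_pow_mul_mul_pow (hZY : Commute Z Y) (hXY : X * Y = Y * X * Z) (b : ℕ) :
    X * Y ^ b = Y ^ b * X * Z ^ b := by
  induction b with
  | zero => simp
  | succ b ih =>
    calc X * Y ^ (b + 1) = X * Y ^ b * Y := by rw [pow_succ, mul_assoc]
      _ = Y ^ b * X * (Z ^ b * Y) := by rw [ih]; group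
      _ = Y ^ b * (X * Y) * Z ^ b := by rw [(hZY.pow_left b).eq]; group
      _ = Y ^ (b + 1) * X * Z ^ (b + 1) := by rw [hXY]; group

theorem pow_mul_pow_eq_pow_mul_pow_mul_pow (hZX : Commute Z X) (hZY : Commute Z Y)
    (hXY : X * Y = Y * X * Z) (a b : ℕ) : X ^ a * Y ^ b = Y ^ b * X ^ a * Z ^ (a * b) := by
  induction a with
  | zero => simp
  | succ a ih =>
    calc X ^ (a + 1) * Y ^ b = X * (X ^ a * Y ^ b) := by rw [pow_succ', mul_assoc]
      _ = X * Y ^ b * X ^ a * Z ^ (a * b) := by rw [ih]; group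
      _ = Y ^ b * X * (Z ^ b * X ^ a) * Z ^ (a * b) := by
        rw [mul_pow_eq_pow_mul_mul_pow hZY hXY]; group
      _ = Y ^ b * X ^ (a + 1) * Z ^ ((a + 1) * b) := by rw [(hZX.pow_pow b a).eq]; group

theorem commutatorElement_mem_commutator (g h : G) : ⁅g, h⁆ ∈ commutator G :=
  Subgroup.commutator_mem_commutator (Subgroup.mem_top g) (Subgroup.mem_top h)

end Commutator

theorem Subgroup.normal_of_le_center {G : Type*} [Group G] {K : Subgroup G}
    (h : K ≤ Subgroup.center G) : K.Normal where
  conj_mem k hk g := by rw [Subgroup.mem_center_iff.1 (h hk) g, mul_inv_cancel_right]; exact hk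

namespace PresentedGroup

variable {α : Type*} {rels : Set (FreeGroup α)}

theorem of_pow_eq_one_of_mem {a : α} {k : ℕ} (h : FreeGroup.of a ^ k ∈ rels) :
    (of a : PresentedGroup rels) ^ k = 1 :=
  (map_pow _ _ _).symm.trans (one_of_mem h)

theorem commute_of_mem {a b : α}
    (h : FreeGroup.of a * FreeGroup.of b * (FreeGroup.of a)⁻¹ * (FreeGroup.of b)⁻¹ ∈ rels) :
    Commute (of a : PresentedGroup rels) (of b) := by
  have h1 := one_of_mem h
  simp only [map_mul, map_inv] at h1
  rwa [mul_inv_eq_one, mul_inv_eq_iff_eq_mul] at h1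

theorem mem_center_iff {g : PresentedGroup rels} :
    g ∈ Subgroup.center (PresentedGroup rels) ↔ ∀ a, Commute g (of a) := by
  rw [← Subgroup.centralizer_univ, ← Subgroup.coe_top, ← closure_range_of,
    Subgroup.centralizer_closure, Subgroup.mem_centralizer_iff, Set.forall_mem_range]
  exact forall_congr' fun _ => eq_comm

end PresentedGroup

namespace Heisenberg

section Pow

variable {R : Type*} [CommRing R]

theorem pow_mk_zero_y (a c : R) (k : ℕ) :
    (⟨a, 0, c⟩ : Heisenberg R) ^ k = ⟨k * a, 0, k * c⟩ := by
  induction k with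
  | zero => ext <;> simp
  | succ k ih => rw [pow_succ, ih]; ext <;> simp <;> ring

theorem pow_mk_zero_x (b c : R) (k : ℕ) :
    (⟨0, b, c⟩ : Heisenberg R) ^ k = ⟨0, k * b, k * c⟩ := by
  induction k with
  | zero => ext <;> simp
  | succ k ih => rw [pow_succ, ih]; ext <;> simp <;> ring

end Pow

variable {n : ℕ} [NeZero n]

theorem eq_pow_mul_pow_mul_pow (v : Heisenberg (ZMod n)) :
    v = ⟨0, 1, 0⟩ ^ v.y.val * ⟨1, 0, 0⟩ ^ v.x.val * ⟨0, 0, 1⟩ ^ v.z.val := by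
  rw [pow_mk_zero_y, pow_mk_zero_x, pow_mk_zero_x]
  ext <;> simp

variable {G : Type*} [Group G]

def lift (X Y Z : G) (hX : X ^ n = 1) (hY : Y ^ n = 1) (hZ : Z ^ n = 1)
    (hZX : Commute Z X) (hZY : Commute Z Y) (hXY : X * Y = Y * X * Z) :
    Heisenberg (ZMod n) →* G where
  toFun v := Y ^ v.y.val * X ^ v.x.val * Z ^ v.z.val
  map_one' := by simp
  map_mul' v w := by
    have hx : (v * w).x = ((v.x.val + w.x.val : ℕ) : ZMod n) := by simp
    have hy : (v * w).y = ((v.y.val + w.y.val : ℕ) : ZMod n) := by simp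
    have hz : (v * w).z = ((v.z.val + w.z.val + v.x.val * w.y.val : ℕ) : ZMod n) := by simp
    rw [hx, hy, hz, pow_zmod_val_natCast hX, pow_zmod_val_natCast hY, pow_zmod_val_natCast hZ]
    set a := v.x.val
    set b := v.y.val
    set c := v.z.val
    set a' := w.x.val
    set b' := w.y.val
    set c' := w.z.val
    calc Y ^ (b + b') * X ^ (a + a') * Z ^ (c + c' + a * b')
        = Y ^ b * Y ^ b' * X ^ a * (Z ^ (a * b') * X ^ a') * Z ^ c * Z ^ c' := by
          rw [(hZX.pow_pow _ _).eq]; group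
      _ = Y ^ b * (X ^ a * Y ^ b') * X ^ a' * Z ^ c * Z ^ c' := by
          rw [pow_mul_pow_eq_pow_mul_pow_mul_pow hZX hZY hXY]; group
      _ = Y ^ b * X ^ a * (Z ^ c * (Y ^ b' * X ^ a')) * Z ^ c' := by
          rw [((hZY.pow_pow _ _).mul_right (hZX.pow_pow _ _)).eq]; group
      _ = Y ^ b * X ^ a * Z ^ c * (Y ^ b' * X ^ a' * Z ^ c') := by group

theorem lift_apply (X Y Z : G) (hX : X ^ n = 1) (hY : Y ^ n = 1) (hZ : Z ^ n = 1)
    (hZX : Commute Z X) (hZY : Commute Z Y) (hXY : X * Y = Y * X * Z) (v : Heisenberg (ZMod n)) :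
    lift X Y Z hX hY hZ hZX hZY hXY v = Y ^ v.y.val * X ^ v.x.val * Z ^ v.z.val := rfl

end Heisenberg

namespace Stmt18

open PresentedGroup

def η₁ : H := PresentedGroup.of 0
def η₃ : H := PresentedGroup.of 2

theorem η₁_pow_three : η₁ ^ 3 = 1 := of_pow_eq_one_of_mem (by simp [rels, rη₁])
theorem η₂_pow_three : η₂ ^ 3 = 1 := of_pow_eq_one_of_mem (by simp [rels, rη₂])
theorem η₃_pow_three : η₃ ^ 3 = 1 := of_pow_eq_one_of_mem (by simp [rels, rη₃])
theorem z₁₂_pow_three : z₁₂ ^ 3 = 1 := of_pow_eq_one_of_mem (by simp [rels, rz₁₂])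
theorem z₂₃_pow_three : z₂₃ ^ 3 = 1 := of_pow_eq_one_of_mem (by simp [rels, rz₂₃])

theorem commute_z₁₂_z₂₃ : Commute z₁₂ z₂₃ := commute_of_mem (by simp [rels, rz₁₂, rz₂₃])

theorem η₂_mul_η₁ : η₂ * η₁ = z₁₂⁻¹ * η₁ * η₂ := by
  have h := mk_eq_mk_of_mul_inv_mem (rels := rels) (x := rη₂ * rη₁) (y := rz₁₂⁻¹ * rη₁ * rη₂)
    (by simp [rels])
  simp only [map_mul, map_inv] at h
  exact h

theorem η₃_mul_η₁_mul_inv : η₃ * η₁ * η₃⁻¹ = z₁₂ * η₁ * η₂ ^ 2 := by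
  have h := mk_eq_mk_of_mul_inv_mem (rels := rels) (x := rη₃ * rη₁ * rη₃⁻¹)
    (y := rz₁₂ * rη₁ * rη₂ ^ 2)
    (by simp [rels])
  simp only [map_mul, map_inv, map_pow] at h
  exact h

theorem η₃_mul_η₂_mul_inv : η₃ * η₂ * η₃⁻¹ = z₂₃ ^ 2 * η₂ := by
  have h := mk_eq_mk_of_mul_inv_mem (rels := rels) (x := rη₃ * rη₂ * rη₃⁻¹) (y := rz₂₃ ^ 2 * rη₂)
    (by simp [rels])
  simp only [map_mul, map_inv, map_pow] at h
  exact h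

theorem z₁₂_mem_center : z₁₂ ∈ Subgroup.center H := by
  refine mem_center_iff.2 fun a => ?_
  fin_cases a
  exacts [commute_of_mem (by simp [rels, rz₁₂, rη₁]), commute_of_mem (by simp [rels, rz₁₂, rη₂]),
    commute_of_mem (by simp [rels, rz₁₂, rη₃]), Commute.refl _, commute_z₁₂_z₂₃]

theorem z₂₃_mem_center : z₂₃ ∈ Subgroup.center H := by
  refine mem_center_iff.2 fun a => ?_
  fin_cases a
  exacts [commute_of_mem (by simp [rels, rz₂₃, rη₁]), commute_of_mem (by simp [rels, rz₂₃, rη₂]),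
    commute_of_mem (by simp [rels, rz₂₃, rη₃]), commute_z₁₂_z₂₃.symm, Commute.refl _]

open scoped commutatorElement

theorem z₁₂_eq_commutatorElement : z₁₂ = ⁅η₁, η₂⁆ := by
  rw [commutatorElement_def, mul_assoc, ← mul_inv_rev, η₂_mul_η₁]; group

theorem z₂₃_eq_commutatorElement_sq : z₂₃ = ⁅η₃, η₂⁆ ^ 2 := by
  rw [commutatorElement_def, η₃_mul_η₂_mul_inv, mul_inv_cancel_right, ← pow_mul,
    pow_eq_pow_mod 4 z₂₃_pow_three, pow_one]

theorem A_le_center_inf_commutator : A ≤ Subgroup.center H ⊓ commutator H := by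
  refine (Subgroup.closure_le _).2 (Set.insert_subset_iff.2 ⟨?_, Set.singleton_subset_iff.2 ?_⟩)
  · refine ⟨z₁₂_mem_center, ?_⟩
    rw [z₁₂_eq_commutatorElement]
    exact commutatorElement_mem_commutator _ _
  · refine ⟨z₂₃_mem_center, ?_⟩
    rw [z₂₃_eq_commutatorElement_sq]
    exact pow_mem (commutatorElement_mem_commutator _ _) 2

theorem normalClosure_eq_A : Subgroup.normalClosure {z₁₂, z₂₃} = A := by
  have : A.Normal := Subgroup.normal_of_le_center (A_le_center_inf_commutator.trans inf_le_left)
  rw [← Subgroup.normalClosure_closure_eq_normalClosure, ← A, Subgroup.normalClosure_eq_self]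

/-- `⟨a, b, c, d, e⟩` stands for the normal form `η₁ ^ a * η₂ ^ b * η₃ ^ c * z₁₂ ^ d * z₂₃ ^ e`. -/
@[ext] structure Model where
  a : ZMod 3
  b : ZMod 3
  c : ZMod 3
  d : ZMod 3
  e : ZMod 3
deriving DecidableEq

namespace Model

instance : Mul Model :=
  ⟨fun x y => ⟨x.a + y.a, x.b + y.b - x.c * y.a, x.c + y.c,
    x.d + y.d + 2 * x.c * (y.a + y.a ^ 2) - y.a * x.b,
    x.e + y.e - x.c * y.b + y.a * x.c - y.a * x.c ^ 2⟩⟩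

instance : One Model := ⟨⟨0, 0, 0, 0, 0⟩⟩

instance : Inv Model :=
  ⟨fun x => ⟨-x.a, -x.b - x.c * x.a, -x.c,
    -x.d + 2 * x.c * (x.a + x.a ^ 2) - x.a * x.b - x.c * x.a ^ 2,
    -x.e - x.c * x.b + x.a * x.c + x.a * x.c ^ 2⟩⟩

@[simp] theorem mul_a (x y : Model) : (x * y).a = x.a + y.a := rfl
@[simp] theorem mul_b (x y : Model) : (x * y).b = x.b + y.b - x.c * y.a := rfl
@[simp] theorem mul_c (x y : Model) : (x * y).c = x.c + y.c := rfl
@[simp] theorem mul_d (x y : Model) :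
    (x * y).d = x.d + y.d + 2 * x.c * (y.a + y.a ^ 2) - y.a * x.b := rfl
@[simp] theorem mul_e (x y : Model) :
    (x * y).e = x.e + y.e - x.c * y.b + y.a * x.c - y.a * x.c ^ 2 := rfl
@[simp] theorem one_a : (1 : Model).a = 0 := rfl
@[simp] theorem one_b : (1 : Model).b = 0 := rfl
@[simp] theorem one_c : (1 : Model).c = 0 := rfl
@[simp] theorem one_d : (1 : Model).d = 0 := rfl
@[simp] theorem one_e : (1 : Model).e = 0 := rfl
@[simp] theorem inv_a (x : Model) : x⁻¹.a = -x.a := rfl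
@[simp] theorem inv_b (x : Model) : x⁻¹.b = -x.b - x.c * x.a := rfl
@[simp] theorem inv_c (x : Model) : x⁻¹.c = -x.c := rfl
@[simp] theorem inv_d (x : Model) :
    x⁻¹.d = -x.d + 2 * x.c * (x.a + x.a ^ 2) - x.a * x.b - x.c * x.a ^ 2 := rfl
@[simp] theorem inv_e (x : Model) : x⁻¹.e = -x.e - x.c * x.b + x.a * x.c + x.a * x.c ^ 2 := rfl

instance : Group Model where
  mul_assoc x y z := by
    have three_eq_zero : (3 : ZMod 3) = 0 := rfl
    ext
    · simp only [mul_a]; ring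
    · simp only [mul_a, mul_b, mul_c]; ring
    · simp only [mul_c]; ring
    · simp only [mul_a, mul_b, mul_c, mul_d]
      linear_combination (-(x.c * y.a * z.a)) * three_eq_zero
    · simp only [mul_a, mul_b, mul_c, mul_e]
      linear_combination (-(z.a * x.c * y.c)) * three_eq_zero
  one_mul x := by ext <;> simp
  mul_one x := by ext <;> simp
  inv_mul_cancel x := by ext <;> simp <;> ring

end Model

def modelGenerators : Fin 5 → Model :=
  ![⟨1, 0, 0, 0, 0⟩, ⟨0, 1, 0, 0, 0⟩, ⟨0, 0, 1, 0, 0⟩, ⟨0, 0, 0, 1, 0⟩, ⟨0, 0, 0, 0, 1⟩]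

theorem lift_modelGenerators_eq_one : ∀ r ∈ rels, FreeGroup.lift modelGenerators r = 1 := by
  simp only [rels, Set.mem_insert_iff, Set.mem_singleton_iff]
  rintro r (rfl|rfl|rfl|rfl|rfl|rfl|rfl|rfl|rfl|rfl|rfl|rfl|rfl|rfl|rfl) <;>
    simp only [rη₁, rη₂, rη₃, rz₁₂, rz₂₃, map_mul, map_inv, map_pow, FreeGroup.lift_apply_of] <;>
    decide

def toModel : H →* Model := PresentedGroup.toGroup lift_modelGenerators_eq_one

def zPowHom : C3 × C3 →* H :=
  (zmodPowHom z₁₂_pow_three).noncommCoprod (zmodPowHom z₂₃_pow_three)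
    fun _ _ => commute_z₁₂_z₂₃.pow_pow _ _

theorem zPowHom_apply (p : C3 × C3) : zPowHom p = z₁₂ ^ p.1.toAdd.val * z₂₃ ^ p.2.toAdd.val := rfl

theorem zPowHom_injective : Function.Injective zPowHom := by
  have key : ∀ p : C3 × C3,
      modelGenerators 3 ^ p.1.toAdd.val * modelGenerators 4 ^ p.2.toAdd.val = 1 → p = 1 := by
    decide
  refine (injective_iff_map_eq_one _).2 fun p hp => key p ?_
  rw [← map_one toModel, ← hp, zPowHom_apply, map_mul, map_pow, map_pow]
  rfl

theorem zPowHom_range : zPowHom.range = A := by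
  refine le_antisymm ?_ ((Subgroup.closure_le _).2 ?_)
  · rintro - ⟨p, rfl⟩
    exact mul_mem (pow_mem (Subgroup.subset_closure (by simp)) _)
      (pow_mem (Subgroup.subset_closure (by simp)) _)
  · rintro - (rfl | rfl)
    · exact ⟨(Multiplicative.ofAdd 1, 1), by simp [zPowHom_apply, ZMod.val_one]⟩
    · exact ⟨(1, Multiplicative.ofAdd 1), by simp [zPowHom_apply, ZMod.val_one]⟩

noncomputable def A_mulEquiv : A ≃* C3 × C3 :=
  ((MonoidHom.ofInjective zPowHom_injective).trans (MulEquiv.subgroupCongr zPowHom_range)).symm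

def heisenbergGenerators : Fin 5 → Heisenberg (ZMod 3) :=
  ![⟨0, 1, 0⟩, ⟨0, 0, 2⟩, ⟨1, 0, 0⟩, 1, 1]

theorem lift_heisenbergGenerators_eq_one :
    ∀ r ∈ rels, FreeGroup.lift heisenbergGenerators r = 1 := by
  simp only [rels, Set.mem_insert_iff, Set.mem_singleton_iff]
  rintro r (rfl|rfl|rfl|rfl|rfl|rfl|rfl|rfl|rfl|rfl|rfl|rfl|rfl|rfl|rfl) <;>
    simp only [rη₁, rη₂, rη₃, rz₁₂, rz₂₃, map_mul, map_inv, map_pow, FreeGroup.lift_apply_of] <;>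
    ext <;> decide

abbrev quotMk : H →* H ⧸ Subgroup.normalClosure {z₁₂, z₂₃} := QuotientGroup.mk' _

theorem quotMk_z₁₂ : quotMk z₁₂ = 1 :=
  (QuotientGroup.eq_one_iff _).2 (Subgroup.subset_normalClosure (by simp))

theorem quotMk_z₂₃ : quotMk z₂₃ = 1 :=
  (QuotientGroup.eq_one_iff _).2 (Subgroup.subset_normalClosure (by simp))

theorem commute_quotMk_η₂_η₁ : Commute (quotMk η₂) (quotMk η₁) := by
  have h := congrArg quotMk η₂_mul_η₁
  simp only [map_mul, map_inv, quotMk_z₁₂, inv_one, one_mul] at h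
  exact h

theorem commute_quotMk_η₂_η₃ : Commute (quotMk η₂) (quotMk η₃) := by
  have h := congrArg quotMk η₃_mul_η₂_mul_inv
  simp only [map_mul, map_inv, map_pow, quotMk_z₂₃, one_pow, one_mul] at h
  exact (mul_inv_eq_iff_eq_mul.1 h).symm

theorem quotMk_η₃_mul_η₁ : quotMk η₃ * quotMk η₁ = quotMk η₁ * quotMk η₃ * quotMk η₂ ^ 2 := by
  have h := congrArg quotMk η₃_mul_η₁_mul_inv
  simp only [map_mul, map_inv, map_pow, quotMk_z₁₂, one_mul] at h
  rw [mul_inv_eq_iff_eq_mul.1 h, mul_assoc, (commute_quotMk_η₂_η₃.pow_left 2).eq, mul_assoc]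

theorem quotMk_pow_three {g : H} (hg : g ^ 3 = 1) : quotMk g ^ 3 = 1 := by
  rw [← map_pow, hg, map_one]

def quotSection : Heisenberg (ZMod 3) →* H ⧸ Subgroup.normalClosure {z₁₂, z₂₃} :=
  Heisenberg.lift (quotMk η₃) (quotMk η₁) (quotMk η₂ ^ 2)
    (quotMk_pow_three η₃_pow_three) (quotMk_pow_three η₁_pow_three)
    (by rw [pow_right_comm, quotMk_pow_three η₂_pow_three, one_pow])
    (commute_quotMk_η₂_η₃.pow_left 2) (commute_quotMk_η₂_η₁.pow_left 2) quotMk_η₃_mul_η₁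

def quotToHeisenberg : H ⧸ Subgroup.normalClosure {z₁₂, z₂₃} →* Heisenberg (ZMod 3) :=
  QuotientGroup.lift _ (PresentedGroup.toGroup lift_heisenbergGenerators_eq_one) <|
    Subgroup.normalClosure_le_normal <| by
      rintro - (rfl | rfl) <;> exact PresentedGroup.toGroup.of _

theorem quotToHeisenberg_quotMk_of (i : Fin 5) :
    quotToHeisenberg (quotMk (PresentedGroup.of i)) = heisenbergGenerators i :=
  PresentedGroup.toGroup.of lift_heisenbergGenerators_eq_one

theorem quotToHeisenberg_comp_quotSection : quotToHeisenberg.comp quotSection = MonoidHom.id _ := by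
  ext1 v
  have h₁ : quotToHeisenberg (quotMk η₁) = ⟨0, 1, 0⟩ := quotToHeisenberg_quotMk_of 0
  have h₂ : quotToHeisenberg (quotMk η₂) ^ 2 = ⟨0, 0, 1⟩ := by
    rw [show quotToHeisenberg (quotMk η₂) = ⟨0, 0, 2⟩ from quotToHeisenberg_quotMk_of 1]
    ext <;> rfl
  have h₃ : quotToHeisenberg (quotMk η₃) = ⟨1, 0, 0⟩ := quotToHeisenberg_quotMk_of 2
  rw [MonoidHom.comp_apply, quotSection, Heisenberg.lift_apply, map_mul, map_mul, map_pow, map_pow,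
    map_pow, map_pow, h₁, h₂, h₃, MonoidHom.id_apply, ← Heisenberg.eq_pow_mul_pow_mul_pow]

theorem quotSection_comp_quotToHeisenberg : quotSection.comp quotToHeisenberg = MonoidHom.id _ := by
  refine QuotientGroup.monoidHom_ext _ (PresentedGroup.ext fun i => ?_)
  change quotSection (quotToHeisenberg (quotMk (of i))) = quotMk (of i)
  rw [quotToHeisenberg_quotMk_of]
  fin_cases i
  · change quotSection ⟨0, 1, 0⟩ = quotMk η₁
    rw [quotSection, Heisenberg.lift_apply, ZMod.val_zero, pow_zero, pow_zero, mul_one, mul_one]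
    exact pow_one _
  · change quotSection ⟨0, 0, 2⟩ = quotMk η₂
    rw [quotSection, Heisenberg.lift_apply, ZMod.val_zero, pow_zero, pow_zero, one_mul, one_mul,
      ← pow_mul, pow_eq_pow_mod _ (quotMk_pow_three η₂_pow_three)]
    exact pow_one _
  · change quotSection ⟨1, 0, 0⟩ = quotMk η₃
    rw [quotSection, Heisenberg.lift_apply, ZMod.val_zero, pow_zero, pow_zero, one_mul, mul_one]
    exact pow_one _
  · exact (map_one _).trans quotMk_z₁₂.symm
  · exact (map_one _).trans quotMk_z₂₃.symm

noncomputable def quotMulEquivHeisenberg :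
    H ⧸ Subgroup.normalClosure {z₁₂, z₂₃} ≃* Heisenberg (ZMod 3) :=
  quotToHeisenberg.toMulEquiv quotSection quotSection_comp_quotToHeisenberg
    quotToHeisenberg_comp_quotSection

theorem efficient_central_extension_of_heisenberg :
    Nonempty (A ≃* C3 × C3) ∧
    A ≤ Subgroup.center H ⊓ commutator H ∧
    Subgroup.normalClosure {z₁₂, z₂₃} = A ∧
    Nonempty ((H ⧸ Subgroup.normalClosure {z₁₂, z₂₃}) ≃* Heisenberg (ZMod 3)) :=
  ⟨⟨A_mulEquiv⟩, A_le_center_inf_commutator, normalClosure_eq_A, ⟨quotMulEquivHeisenberg⟩⟩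

end Stmt18
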